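/- arXiv:2105.13021 — 4 statements merged into one kernel-verified Lean document; each statement's English description precedes it below -/
import Mathlib

section
/- Let Γ be the adjacency matrix (over F_4, with entries 0 or 1) of a simple undirected graph G on n vertices, and let ω be a root of x^2+x+1 over F_2. Then any two rows r_i, r_j of the matrix Γ + ω·I_n satisfy r_i * r_j = 0 under the trace Hermitian inner product. Consequently, the F_2-span C of the rows of Γ + ω·I_n is self-orthogonal: C ⊆ C*. -/
noncomputable section

/-- The field with 4 elements. -/
abbrev F4 := GaloisField 2 2

/-- The trace Hermitian inner product on `F4^n`. -/
def trIP {n : ℕ} (a b : Fin n → F4) : F4 :=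
  ∑ j, (a j * (b j) ^ 2 + (a j) ^ 2 * b j)

/-- The rows of `Γ + ω·I` are pairwise orthogonal with respect to the trace
Hermitian inner product, where `Γ` is the adjacency matrix of a simple graph
(symmetric, zero diagonal, entries `0` or `1`) and `ω² + ω + 1 = 0`.
Consequently, the `F_2`-span `C` of the rows is self-orthogonal: `C ⊆ C*`. -/
theorem graphCode_selfOrthogonal {n : ℕ} (Γ : Matrix (Fin n) (Fin n) F4)
    (hsym : Γ.IsSymm) (hdiag : ∀ i, Γ i i = 0)
    (h01 : ∀ i j, Γ i j = 0 ∨ Γ i j = 1)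
    (ω : F4) (hω : ω ^ 2 + ω + 1 = 0)
    (M : Fin n → Fin n → F4)
    (hM : ∀ i j, M i j = Γ i j + ω * (if i = j then 1 else 0))
    (C : Submodule (ZMod 2) (Fin n → F4))
    (hC : C = Submodule.span (ZMod 2) (Set.range M)) :
    (∀ i j, trIP (M i) (M j) = 0) ∧ ∀ c ∈ C, ∀ w ∈ C, trIP w c = 0 := by
  have htwo : (2 : F4) = 0 := by
    have : CharP F4 2 := inferInstance
    exact_mod_cast CharP.cast_eq_zero F4 2
  have hωsum : ω ^ 2 + ω = 1 := by linear_combination hω - htwo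
  have sq : ∀ a b, Γ a b ^ 2 = Γ a b := by
    intro a b; rcases h01 a b with h | h <;> rw [h] <;> ring
  have key : ∀ i j, trIP (M i) (M j) = 0 := by
    intro i j
    unfold trIP
    rcases eq_or_ne i j with rfl | hij
    · apply Finset.sum_eq_zero
      intro k _
      linear_combination (M i k ^ 3) * htwo
    · have : ∀ k : Fin n, M i k * (M j k) ^ 2 + (M i k) ^ 2 * (M j k)
          = (if k = i then Γ i j else 0) + (if k = j then Γ i j else 0) := by
        intro k
        rcases eq_or_ne k i with h1 | h1
        · subst h1
          simp only [hM, hdiag, if_neg (fun h : j = k => hij h.symm),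
            if_neg hij, eq_self_iff_true, if_true, zero_add, mul_one, mul_zero, add_zero]
          linear_combination ω * sq j k + Γ j k * hωsum + hsym.apply k j
        · rcases eq_or_ne k j with h2 | h2
          · subst h2
            simp only [hM, hdiag, if_neg (fun h : i = k => h1 h.symm),
              if_neg h1, eq_self_iff_true, if_true, zero_add, mul_one, mul_zero, add_zero, zero_add]
            linear_combination ω * sq i k + Γ i k * hωsum
          · simp only [hM, if_neg (fun h : i = k => h1 h.symm),
              if_neg (fun h : j = k => h2 h.symm), if_neg h1, if_neg h2,
              mul_zero, add_zero]
            linear_combination Γ i k * sq j k + Γ j k * sq i k + Γ i k * Γ j k * htwo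
      rw [Finset.sum_congr rfl (fun k _ => this k), Finset.sum_add_distrib]
      simp
      linear_combination (Γ i j) * htwo
  refine ⟨key, ?_⟩
  subst hC
  -- bilinearity lemmas
  have hzeroR : ∀ w : Fin n → F4, trIP w 0 = 0 := by intro w; simp [trIP]
  have hzeroL : ∀ c : Fin n → F4, trIP 0 c = 0 := by intro c; simp [trIP]
  have haddL : ∀ a b c : Fin n → F4, trIP (a + b) c = trIP a c + trIP b c := by
    intro a b c
    simp only [trIP, Pi.add_apply, ← Finset.sum_add_distrib]
    refine Finset.sum_congr rfl fun j _ => ?_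
    linear_combination (a j * b j * c j) * htwo
  have hsymm : ∀ a b : Fin n → F4, trIP a b = trIP b a := by
    intro a b
    simp only [trIP]
    exact Finset.sum_congr rfl fun j _ => by ring
  have haddR : ∀ a b c : Fin n → F4, trIP c (a + b) = trIP c a + trIP c b := by
    intro a b c; rw [hsymm, haddL, hsymm a c, hsymm b c]
  have hz : ∀ z : ZMod 2, z = 0 ∨ z = 1 := by decide
  have hsmulL : ∀ (z : ZMod 2) (a c : Fin n → F4), trIP (z • a) c = 0 ∨ trIP (z • a) c = trIP a c := by
    intro z a c
    rcases hz z with rfl | rfl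
    · left; rw [zero_smul]; exact hzeroL c
    · right; rw [one_smul]
  intro c hc w hw
  induction hw using Submodule.span_induction with
  | mem x hx =>
      obtain ⟨i, rfl⟩ := hx
      induction hc using Submodule.span_induction with
      | mem y hy => obtain ⟨j, rfl⟩ := hy; exact key i j
      | zero => exact hzeroR _
      | add a b _ _ iha ihb => rw [haddR, iha, ihb, add_zero]
      | smul z a _ ih =>
          rcases hz z with rfl | rfl
          · rw [zero_smul]; exact hzeroR _
          · rw [one_smul]; exact ih
  | zero => exact hzeroL _
  | add a b _ _ iha ihb => rw [haddL, iha, ihb, add_zero]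
  | smul z a _ ih =>
      rcases hz z with rfl | rfl
      · rw [zero_smul]; exact hzeroL _
      · rw [one_smul]; exact ih

end
end

section
/- With notation as above, the n rows of Γ + ω·I_n are linearly independent over F_2, so the graph code C(G), the F_2-span of these rows, has exactly 2^n elements. -/
/-!
In a vanishing `F₂`-combination `∑ gᵢ (Γᵢ + ω eᵢ)`, coordinate `j` reads `∑ gᵢ Γᵢⱼ + gⱼ ω = 0`.
The sum lies in `F₂` because `Γ` is a `0/1` matrix, while `ω ∉ F₂` since it is a root of
`X² + X + 1`; hence `gⱼ = 0`.
-/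

noncomputable section

theorem LinearIndependent.natCard_span {R V ι : Type*} [Ring R] [AddCommGroup V] [Module R V]
    [Finite ι] {v : ι → V} (hv : LinearIndependent R v) :
    Nat.card (Submodule.span R (Set.range v)) = Nat.card R ^ Nat.card ι := by
  rw [Nat.card_congr (Module.Basis.span hv).equivFun.toEquiv, Nat.card_fun]

theorem linearIndependent_add_single {F L ι : Type*} [Field F] [Ring L] [Algebra F L]
    [Fintype ι] [DecidableEq ι] {Γ : ι → ι → L} (hΓ : ∀ i j, Γ i j ∈ (⊥ : Subalgebra F L))
    {ω : L} (hω : ω ∉ (⊥ : Subalgebra F L)) :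
    LinearIndependent F fun i ↦ Γ i + Pi.single i ω := by
  rw [Fintype.linearIndependent_iff]
  intro g hg j
  by_contra hgj
  have hcol : ∑ i, g i • Γ i j + g j • ω = 0 := by
    simpa [Finset.sum_apply, smul_add, Pi.single_apply, Finset.sum_add_distrib] using congrFun hg j
  apply hω
  have hω_eq : ω = (g j)⁻¹ • -∑ i, g i • Γ i j := by
    rw [← eq_neg_of_add_eq_zero_right hcol, inv_smul_smul₀ hgj]
  rw [hω_eq]
  exact Subalgebra.smul_mem _ (neg_mem (Subalgebra.sum_mem _ fun i _ ↦
    Subalgebra.smul_mem _ (hΓ i j) _)) _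

theorem ZMod.mem_bot_subalgebra_two_iff {L : Type*} [Ring L] [Algebra (ZMod 2) L] {x : L} :
    x ∈ (⊥ : Subalgebra (ZMod 2) L) ↔ x = 0 ∨ x = 1 := by
  rw [Algebra.mem_bot]
  constructor
  · rintro ⟨a, rfl⟩
    fin_cases a
    exacts [Or.inl (map_zero _), Or.inr (map_one _)]
  · rintro (rfl | rfl)
    exacts [⟨0, map_zero _⟩, ⟨1, map_one _⟩]

theorem graphCode_card_general {n : ℕ} (Γ : Matrix (Fin n) (Fin n) F4)
    (h01 : ∀ i j, Γ i j = 0 ∨ Γ i j = 1)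
    (ω : F4) (hω : ω ^ 2 + ω + 1 = 0)
    (M : Fin n → Fin n → F4)
    (hM : ∀ i j, M i j = Γ i j + ω * (if i = j then 1 else 0)) :
    LinearIndependent (ZMod 2) M ∧
      Nat.card (Submodule.span (ZMod 2) (Set.range M)) = 2 ^ n := by
  have hM_eq : M = fun i ↦ Γ i + Pi.single i ω := by
    ext i j
    simp [hM, Pi.single_apply, eq_comm]
  have hω_notMem : ω ∉ (⊥ : Subalgebra (ZMod 2) F4) := by
    rw [ZMod.mem_bot_subalgebra_two_iff]
    rintro (rfl | rfl)
    · simp at hω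
    · rw [one_pow, CharTwo.add_self_eq_zero, zero_add] at hω
      exact one_ne_zero hω
  have hind : LinearIndependent (ZMod 2) M := hM_eq ▸
    linearIndependent_add_single (fun i j ↦ ZMod.mem_bot_subalgebra_two_iff.2 (h01 i j)) hω_notMem
  refine ⟨hind, ?_⟩
  rw [hind.natCard_span, Nat.card_zmod, Nat.card_fin]

/-- The `n` rows of `Γ + ω·I_n` (with `Γ` the adjacency matrix of a simple
graph and `ω² + ω + 1 = 0`) are linearly independent over `F_2`, so the graph
code, their `F_2`-span, has exactly `2^n` elements. -/
theorem graphCode_card {n : ℕ} (Γ : Matrix (Fin n) (Fin n) F4)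
    (hsym : Γ.IsSymm) (hdiag : ∀ i, Γ i i = 0)
    (h01 : ∀ i j, Γ i j = 0 ∨ Γ i j = 1)
    (ω : F4) (hω : ω ^ 2 + ω + 1 = 0)
    (M : Fin n → Fin n → F4)
    (hM : ∀ i j, M i j = Γ i j + ω * (if i = j then 1 else 0)) :
    LinearIndependent (ZMod 2) M ∧
      Nat.card (Submodule.span (ZMod 2) (Set.range M)) = 2 ^ n :=
  graphCode_card_general Γ h01 ω hω M hM

end
end

section
/- The graph code C(G) of any simple graph G on n vertices is self-dual with respect to the trace Hermitian inner product: C(G) = C(G)*. -/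
noncomputable section

/-!
Write `M = Γ + ωI`, so that row `i` of `M` is `Γᵢ + ω eᵢ`. The form `trIP` is biadditive, vanishes
on pairs of `𝔽₂`-vectors, and `trIP a (ω eᵢ) = aᵢ (ω² + ω) = aᵢ` for `aᵢ ∈ 𝔽₂`. Hence
`trIP Mᵢ Mⱼ = Γᵢⱼ + Γⱼᵢ = 0`, so `C ⊆ C*`. Conversely, for `w ∈ C*` put `bⱼ = wⱼ + wⱼ²`, the
`ω`-coordinate of `wⱼ`; then `u = w - ∑ bⱼ Mⱼ` is an `𝔽₂`-vector (entrywise, `M² = M + I`)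
orthogonal to every row, and `trIP u Mᵢ = uᵢ` forces `u = 0`, i.e. `w ∈ C`.
-/

open Submodule

namespace F4

theorem pow_four (x : F4) : x ^ 4 = x := by
  let _ : Fintype F4 := Fintype.ofFinite F4
  have hcard : Fintype.card F4 = 4 := by
    rw [Fintype.card_eq_nat_card, GaloisField.card 2 2 two_ne_zero]; rfl
  simpa [hcard] using FiniteField.pow_card x

theorem add_sq_sq_eq_self (x : F4) : (x + x ^ 2) ^ 2 = x + x ^ 2 := by
  rw [add_pow_char, ← pow_mul, pow_four, add_comm]

end F4

section TraceHermitian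

variable {n : ℕ}

theorem trIP_comm (a b : Fin n → F4) : trIP a b = trIP b a :=
  Finset.sum_congr rfl fun _ _ => by ring

theorem trIP_add_left (a a' b : Fin n → F4) : trIP (a + a') b = trIP a b + trIP a' b := by
  simp only [trIP, Pi.add_apply, add_pow_char, ← Finset.sum_add_distrib]
  exact Finset.sum_congr rfl fun _ _ => by ring

theorem trIP_add_right (a b b' : Fin n → F4) : trIP a (b + b') = trIP a b + trIP a b' := by
  rw [trIP_comm, trIP_add_left, trIP_comm b, trIP_comm b']

theorem trIP_smul_left (r : ZMod 2) (a b : Fin n → F4) : trIP (r • a) b = r • trIP a b := by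
  obtain rfl | rfl : r = 0 ∨ r = 1 := by decide +revert
  all_goals simp [trIP]

theorem trIP_single_right (a : Fin n → F4) (j : Fin n) (x : F4) :
    trIP a (Pi.single j x) = a j * x ^ 2 + a j ^ 2 * x := by
  rw [trIP, Finset.sum_eq_single j (fun k _ hk => by simp [hk]) (by simp)]
  simp

theorem trIP_single_single (i j : Fin n) (x : F4) : trIP (Pi.single i x) (Pi.single j x) = 0 := by
  rw [trIP_single_right]
  rcases eq_or_ne j i with rfl | h
  · rw [Pi.single_eq_same]
    grind
  · simp [h]

theorem trIP_eq_zero_of_sq_eq_self {a b : Fin n → F4} (ha : ∀ k, a k ^ 2 = a k)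
    (hb : ∀ k, b k ^ 2 = b k) : trIP a b = 0 :=
  Finset.sum_eq_zero fun k _ => by
    rw [ha, hb]
    grind

theorem trIP_single_of_sq_eq_self {a : Fin n → F4} {j : Fin n} (ha : a j ^ 2 = a j) {ω : F4}
    (hω : ω ^ 2 + ω + 1 = 0) : trIP a (Pi.single j ω) = a j := by
  rw [trIP_single_right, ha]
  grind

theorem trIP_eq_zero_of_mem_span {S : Set (Fin n → F4)} (hS : ∀ a ∈ S, ∀ b ∈ S, trIP a b = 0)
    {a b : Fin n → F4} (ha : a ∈ span (ZMod 2) S) (hb : b ∈ span (ZMod 2) S) : trIP a b = 0 := by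
  induction ha, hb using span_induction₂ with
  | mem_mem x y hx hy => exact hS x hx y hy
  | zero_left => simp [trIP]
  | zero_right => simp [trIP]
  | add_left x y z _ _ _ hxz hyz => rw [trIP_add_left, hxz, hyz, add_zero]
  | add_right x y z _ _ _ hxy hxz => rw [trIP_add_right, hxy, hxz, add_zero]
  | smul_left r x y _ _ h => rw [trIP_smul_left, h, smul_zero]
  | smul_right r x y _ _ h => rw [trIP_comm, trIP_smul_left, trIP_comm, h, smul_zero]

end TraceHermitian

theorem Matrix.add_smul_one_row_eq {m R : Type*} [DecidableEq m] [Semiring R] (A : Matrix m m R)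
    (r : R) (i : m) : (A + r • 1) i = A i + Pi.single i r := by
  funext j
  simp [Matrix.one_apply, Pi.single_apply, eq_comm]

section GraphCode

variable {n : ℕ} {Γ : Matrix (Fin n) (Fin n) F4} {ω : F4}

theorem add_smul_one_apply_sq (hΓ : ∀ i j, Γ i j ^ 2 = Γ i j) (hω : ω ^ 2 + ω + 1 = 0)
    (i j : Fin n) : (Γ + ω • 1) i j ^ 2 = (Γ + ω • 1) i j + (1 : Matrix (Fin n) (Fin n) F4) i j := by
  simp only [Matrix.add_apply, Matrix.smul_apply, Matrix.one_apply, smul_eq_mul, add_pow_char,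
    mul_pow, hΓ]
  split_ifs
  · grind
  · simp

theorem trIP_add_smul_one_row (hΓ : ∀ i j, Γ i j ^ 2 = Γ i j) (hω : ω ^ 2 + ω + 1 = 0)
    {a : Fin n → F4} (ha : ∀ k, a k ^ 2 = a k) (i : Fin n) : trIP a ((Γ + ω • 1) i) = a i := by
  rw [Matrix.add_smul_one_row_eq, trIP_add_right, trIP_eq_zero_of_sq_eq_self ha (hΓ i), zero_add,
    trIP_single_of_sq_eq_self (ha i) hω]

theorem trIP_add_smul_one_row_row (hsym : Γ.IsSymm) (hΓ : ∀ i j, Γ i j ^ 2 = Γ i j)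
    (hω : ω ^ 2 + ω + 1 = 0) (i j : Fin n) : trIP ((Γ + ω • 1) i) ((Γ + ω • 1) j) = 0 :=
  calc trIP ((Γ + ω • 1) i) ((Γ + ω • 1) j)
      = Γ i j + trIP (Pi.single i ω) (Γ j) + trIP (Pi.single i ω) (Pi.single j ω) := by
        rw [Matrix.add_smul_one_row_eq Γ ω i, trIP_add_left, trIP_add_smul_one_row hΓ hω (hΓ i),
          Matrix.add_smul_one_row_eq Γ ω j, trIP_add_right, add_assoc]
    _ = Γ i j + Γ j i := by
        rw [trIP_comm, trIP_single_of_sq_eq_self (hΓ j i) hω, trIP_single_single, add_zero]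
    _ = 0 := by rw [hsym.apply, CharTwo.add_self_eq_zero]

theorem trIP_eq_zero_of_mem_span_add_smul_one (hsym : Γ.IsSymm) (hΓ : ∀ i j, Γ i j ^ 2 = Γ i j)
    (hω : ω ^ 2 + ω + 1 = 0) {a b : Fin n → F4} (ha : a ∈ span (ZMod 2) (Set.range (Γ + ω • 1)))
    (hb : b ∈ span (ZMod 2) (Set.range (Γ + ω • 1))) : trIP a b = 0 := by
  refine trIP_eq_zero_of_mem_span ?_ ha hb
  rintro _ ⟨i, rfl⟩ _ ⟨j, rfl⟩
  exact trIP_add_smul_one_row_row hsym hΓ hω i j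

theorem exists_sq_eq_self_add_mem_span (hΓ : ∀ i j, Γ i j ^ 2 = Γ i j) (hω : ω ^ 2 + ω + 1 = 0)
    (w : Fin n → F4) : ∃ u : Fin n → F4, (∀ k, u k ^ 2 = u k) ∧
      ∃ c ∈ span (ZMod 2) (Set.range (Γ + ω • 1)), w = u + c := by
  set c := ∑ j, (w j + w j ^ 2) • (Γ + ω • 1) j
  refine ⟨w - c, fun k => ?_, c, sum_mem fun j _ => ?_, (sub_add_cancel w c).symm⟩
  · have hck : c k ^ 2 = c k + (w k + w k ^ 2) := by
      simp only [c, Finset.sum_apply, Pi.smul_apply, smul_eq_mul, sum_pow_char, mul_pow,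
        F4.add_sq_sq_eq_self, add_smul_one_apply_sq hΓ hω, mul_add, Finset.sum_add_distrib,
        Matrix.one_apply, mul_ite, mul_one, mul_zero, Finset.sum_ite_eq', Finset.mem_univ, if_true]
    rw [Pi.sub_apply, sub_pow_char, hck]
    grind
  · rcases eq_zero_or_one_of_sq_eq_self (F4.add_sq_sq_eq_self (w j)) with h | h
    · rw [h, zero_smul]
      exact zero_mem _
    · rw [h, one_smul]
      exact subset_span ⟨j, rfl⟩

theorem mem_span_of_forall_trIP_add_smul_one_row_eq_zero (hsym : Γ.IsSymm)
    (hΓ : ∀ i j, Γ i j ^ 2 = Γ i j) (hω : ω ^ 2 + ω + 1 = 0) {w : Fin n → F4}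
    (hw : ∀ i, trIP w ((Γ + ω • 1) i) = 0) : w ∈ span (ZMod 2) (Set.range (Γ + ω • 1)) := by
  obtain ⟨u, hu, c, hc, rfl⟩ := exists_sq_eq_self_add_mem_span hΓ hω w
  suffices u = 0 by rwa [this, zero_add]
  funext i
  have hci : trIP c ((Γ + ω • 1) i) = 0 :=
    trIP_eq_zero_of_mem_span_add_smul_one hsym hΓ hω hc (subset_span ⟨i, rfl⟩)
  rw [← trIP_add_smul_one_row hΓ hω hu i, ← add_zero (trIP u _), ← hci, ← trIP_add_left]
  exact hw i

end GraphCode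

theorem graphCode_selfDual_general {n : ℕ} (Γ : Matrix (Fin n) (Fin n) F4)
    (hsym : Γ.IsSymm)
    (h01 : ∀ i j, Γ i j = 0 ∨ Γ i j = 1)
    (ω : F4) (hω : ω ^ 2 + ω + 1 = 0)
    (M : Fin n → Fin n → F4)
    (hM : ∀ i j, M i j = Γ i j + ω * (if i = j then 1 else 0))
    (C : Submodule (ZMod 2) (Fin n → F4))
    (hC : C = Submodule.span (ZMod 2) (Set.range M)) :
    (C : Set (Fin n → F4)) = {w | ∀ c ∈ C, trIP w c = 0} := by
  have hΓ : ∀ i j, Γ i j ^ 2 = Γ i j := fun i j => by rcases h01 i j with h | h <;> simp [h]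
  obtain rfl : M = (Γ + ω • 1 : Matrix (Fin n) (Fin n) F4) := by
    funext i j
    simp [hM, Matrix.one_apply]
  subst hC
  ext w
  exact ⟨fun hw c hc => trIP_eq_zero_of_mem_span_add_smul_one hsym hΓ hω hw hc, fun hw =>
    mem_span_of_forall_trIP_add_smul_one_row_eq_zero hsym hΓ hω fun i => hw _ (subset_span ⟨i, rfl⟩)⟩

/-- The graph code `C(G)` of any simple graph `G` on `n` vertices, the
`F_2`-span of the rows of `Γ(G) + ω·I_n`, is self-dual with respect to the
trace Hermitian inner product: `C(G) = C(G)*`. -/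
theorem graphCode_selfDual {n : ℕ} (Γ : Matrix (Fin n) (Fin n) F4)
    (hsym : Γ.IsSymm) (hdiag : ∀ i, Γ i i = 0)
    (h01 : ∀ i j, Γ i j = 0 ∨ Γ i j = 1)
    (ω : F4) (hω : ω ^ 2 + ω + 1 = 0)
    (M : Fin n → Fin n → F4)
    (hM : ∀ i j, M i j = Γ i j + ω * (if i = j then 1 else 0))
    (C : Submodule (ZMod 2) (Fin n → F4))
    (hC : C = Submodule.span (ZMod 2) (Set.range M)) :
    (C : Set (Fin n → F4)) = {w | ∀ c ∈ C, trIP w c = 0} :=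
  graphCode_selfDual_general Γ hsym h01 ω hω M hM C hC

end
end

section
/- Let G be a simple graph on n vertices and C(G) its graph code (the F_2-span of the rows of Γ(G) + ω·I_n over F_4). Then every codeword of C(G) has even weight if and only if every vertex of G has odd degree. -/
/-! Write a codeword as `x = ∑ v, c v • M v` with `c : Fin n → 𝔽₂`. Its `j`-th coordinate is
`a j • 1 + c j • ω`, where `a = c ᵥ* Γ`, and since `1, ω` are independent over `𝔽₂` the indicator
of `x j ≠ 0` is `a j + c j + a j * c j`. Summing over `j`, the first terms give `∑ v, c v * deg v`
and the cross terms give `c ᵥ* Γ ⬝ᵥ c`, which vanishes in characteristic two because `Γ` is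
symmetric with zero diagonal. Hence `wt x ≡ ∑ v, c v * (deg v + 1) (mod 2)`: all codewords are
even iff every row is, i.e. iff every degree is odd. -/

noncomputable section

/-- The weight of a vector: the number of nonzero coordinates. -/
def wt {n : ℕ} (x : Fin n → F4) : ℕ := Nat.card {j : Fin n // x j ≠ 0}

open Finset Matrix

theorem Matrix.IsSymm.dotProduct_mulVec_self_eq_zero {ι R : Type*} [Fintype ι] [CommRing R]
    [CharP R 2] {A : Matrix ι ι R} (hA : A.IsSymm) (hdiag : A.diag = 0) (v : ι → R) :
    v ⬝ᵥ A *ᵥ v = 0 := by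
  have hsum : v ⬝ᵥ A *ᵥ v = ∑ p : ι × ι, v p.1 * A p.1 p.2 * v p.2 := by
    simp [dotProduct, mulVec, Finset.mul_sum, Fintype.sum_prod_type, mul_assoc]
  rw [hsum]
  refine sum_ninvolution Prod.swap (fun p => ?_) (fun p hp => ?_) (fun _ => mem_univ _)
    Prod.swap_swap
  · rw [Prod.fst_swap, Prod.snd_swap, hA.apply p.1 p.2]
    linear_combination CharTwo.add_self_eq_zero (v p.1 * A p.1 p.2 * v p.2)
  · intro hswap
    obtain ⟨i, j⟩ := p
    obtain rfl : j = i := congrArg Prod.fst hswap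
    simp [← Matrix.diag_apply, hdiag] at hp

open Classical in
theorem LinearIndependent.ite_smul_add_smul_eq_zero {V : Type*} [AddCommGroup V]
    [Module (ZMod 2) V] {x y : V} (h : LinearIndependent (ZMod 2) ![x, y]) (s t : ZMod 2) :
    (if s • x + t • y = 0 then 0 else 1 : ZMod 2) = s + t + s * t := by
  have two_cases : ∀ a : ZMod 2, a = 0 ∨ a = 1 := by decide
  by_cases hz : s • x + t • y = 0
  · obtain ⟨rfl, rfl⟩ := LinearIndependent.pair_iff.1 h s t hz
    simp
  · rw [if_neg hz]
    rcases two_cases s with rfl | rfl <;> rcases two_cases t with rfl | rfl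
    · simp at hz
    all_goals decide

theorem linearIndependent_one_of_sq_add_add_one_eq_zero {ω : F4} (hω : ω ^ 2 + ω + 1 = 0) :
    LinearIndependent (ZMod 2) ![1, ω] := by
  rw [LinearIndependent.pair_iff' one_ne_zero]
  intro a
  obtain rfl | rfl : a = 0 ∨ a = 1 := by revert a; decide
  · rintro rfl
    simp at hω
  · rintro rfl
    rw [one_smul, one_pow, CharTwo.add_self_eq_zero, zero_add] at hω
    exact one_ne_zero hω

open Classical in
theorem wt_cast_zmod_two {n : ℕ} (x : Fin n → F4) :
    (wt x : ZMod 2) = ∑ j, if x j = 0 then 0 else 1 := by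
  rw [wt, Nat.card_eq_fintype_card, Fintype.card_subtype, natCast_card_filter]
  simp_rw [ite_not]

section GraphCode

variable {n : ℕ} (G : SimpleGraph (Fin n)) [DecidableRel G.Adj] {ω : F4}
  {M : Fin n → Fin n → F4}

theorem sum_smul_rows_apply
    (hM : ∀ i j, M i j = (if G.Adj i j then 1 else 0) + (if i = j then ω else 0))
    (c : Fin n → ZMod 2) (j : Fin n) :
    (∑ v, c v • M v) j = (c ᵥ* G.adjMatrix (ZMod 2)) j • 1 + c j • ω := by
  simp [Finset.sum_apply, hM, vecMul, dotProduct, smul_add, sum_add_distrib, Finset.sum_smul,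
    SimpleGraph.adjMatrix_apply]

theorem wt_sum_smul_rows_cast (hω : ω ^ 2 + ω + 1 = 0)
    (hM : ∀ i j, M i j = (if G.Adj i j then 1 else 0) + (if i = j then ω else 0))
    (c : Fin n → ZMod 2) :
    (wt (∑ v, c v • M v) : ZMod 2) = ∑ v, c v * (G.degree v + 1) := by
  classical
  have hdeg : ∑ j, (c ᵥ* G.adjMatrix (ZMod 2)) j = ∑ v, c v * G.degree v := by
    rw [← dotProduct_one, ← dotProduct_mulVec]
    simp [dotProduct]
  have hcross : ∑ j, (c ᵥ* G.adjMatrix (ZMod 2)) j * c j = 0 := by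
    rw [← dotProduct, ← dotProduct_mulVec]
    exact G.isSymm_adjMatrix.dotProduct_mulVec_self_eq_zero (G.diag_adjMatrix (ZMod 2)) c
  simp only [wt_cast_zmod_two, sum_smul_rows_apply G hM,
    (linearIndependent_one_of_sq_add_add_one_eq_zero hω).ite_smul_add_smul_eq_zero,
    sum_add_distrib, hdeg, hcross, mul_add, mul_one, add_zero]

end GraphCode

/-- Every codeword of the graph code `C(G)` (the `F_2`-span of the rows of
`Γ(G) + ω·I_n`) has even weight if and only if every vertex of `G` has odd
degree. -/
theorem graphCode_typeII_iff {n : ℕ} (G : SimpleGraph (Fin n))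
    [DecidableRel G.Adj]
    (ω : F4) (hω : ω ^ 2 + ω + 1 = 0)
    (M : Fin n → Fin n → F4)
    (hM : ∀ i j, M i j =
      (if G.Adj i j then 1 else 0) + (if i = j then ω else 0)) :
    (∀ c ∈ Submodule.span (ZMod 2) (Set.range M), Even (wt c)) ↔
      ∀ v, Odd (G.degree v) := by
  constructor
  · intro h v
    have hrow := h (M v) (Submodule.subset_span ⟨v, rfl⟩)
    have hsingle : ∑ u, (Pi.single v 1 : Fin n → ZMod 2) u • M u = M v := by simp
    rw [← ZMod.natCast_eq_zero_iff_even, ← hsingle, wt_sum_smul_rows_cast G hω hM] at hrow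
    simpa [Pi.single_apply, CharTwo.add_eq_zero, ZMod.natCast_eq_one_iff_odd] using hrow
  · intro h _ hc
    obtain ⟨c, rfl⟩ := (Submodule.mem_span_range_iff_exists_fun _).1 hc
    rw [← ZMod.natCast_eq_zero_iff_even, wt_sum_smul_rows_cast G hω hM]
    simp [ZMod.natCast_eq_one_iff_odd.2 (h _), CharTwo.add_self_eq_zero]

end
end
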